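/- arXiv:2411.16051 — 2 statements merged into one kernel-verified Lean document; each statement's English description precedes it below -/
import Mathlib

section
/- Let κ ∈ (0,6], set h = (6−κ)/(2κ) and h̃ = (6−κ)(κ−2)/(8κ), and let r ∈ ℝ. Let Φ : (0,1) → ℝ be twice differentiable, and define Z : 𝒳₂ → ℝ by Z(θ₁,θ₂) = (2·sin((θ₂−θ₁)/2))^(−2h) · Φ(sin²((θ₂−θ₁)/4)). Then Z satisfies the radial BPZ system with constant ℵ = h̃ − r if and only if Φ satisfies Euler's hypergeometric differential equation u(1−u)·Φ''(u) + ((3κ−8)/(2κ))·(1−2u)·Φ'(u) + (8r/κ)·Φ(u) = 0 for all u ∈ (0,1). -/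
/-!
`Z` depends only on `x = θ₂ - θ₁`, so `∂₁ = -∂₂` on it and, `cot` being odd and `sin²` even, both
equations of the system collapse to one second-order ODE on `(0, 2π)` for
`G x = (2 sin (x/2)) ^ (-2h) · Φ (sin² (x/4))`. For the weight `h = (6-κ)/(2κ)` the gauge factor
cancels the `1 / sin²` potential, and the substitution `u = sin² (x/4)`, a bijection of `(0, 2π)`
onto `(0, 1)` with `cos (x/2) = 1 - 2u` and `sin² (x/2) = 4u(1-u)`, turns that ODE into
`2κ u(1-u) (2 sin (x/2)) ^ (-2h-2)` times the hypergeometric equation at `u`.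
-/

open Real Set

/-- First partial derivative of `Z` in its first variable. -/
noncomputable def pderiv1 (Z : ℝ → ℝ → ℝ) (θ₁ θ₂ : ℝ) : ℝ :=
  deriv (fun s => Z s θ₂) θ₁

/-- First partial derivative of `Z` in its second variable. -/
noncomputable def pderiv2 (Z : ℝ → ℝ → ℝ) (θ₁ θ₂ : ℝ) : ℝ :=
  deriv (fun s => Z θ₁ s) θ₂

/-- Second partial derivative of `Z` in its first variable. -/
noncomputable def pderiv11 (Z : ℝ → ℝ → ℝ) (θ₁ θ₂ : ℝ) : ℝ :=
  deriv (fun s => pderiv1 Z s θ₂) θ₁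

/-- Second partial derivative of `Z` in its second variable. -/
noncomputable def pderiv22 (Z : ℝ → ℝ → ℝ) (θ₁ θ₂ : ℝ) : ℝ :=
  deriv (fun s => pderiv2 Z θ₁ s) θ₂

/-- `Z` satisfies the radial BPZ system with constant `ℵ` on
`𝒳₂ = {(θ₁, θ₂) : θ₁ < θ₂ < θ₁ + 2π}`: for each `j ∈ {1,2}`, with `ℓ` the other index,
`(κ/2)·∂ⱼ²Z + cot((θ_ℓ−θ_j)/2)·∂_ℓZ − ((6−κ)/(4κ))·Z/sin²((θ_ℓ−θ_j)/2) = ℵ·Z`. -/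
def RadialBPZ₂ (κ ℵ : ℝ) (Z : ℝ → ℝ → ℝ) : Prop :=
  ∀ θ₁ θ₂ : ℝ, θ₁ < θ₂ → θ₂ < θ₁ + 2 * π →
    (κ / 2 * pderiv11 Z θ₁ θ₂ + Real.cot ((θ₂ - θ₁) / 2) * pderiv2 Z θ₁ θ₂
        - (6 - κ) / (4 * κ) * Z θ₁ θ₂ / Real.sin ((θ₂ - θ₁) / 2) ^ 2
      = ℵ * Z θ₁ θ₂)
    ∧ (κ / 2 * pderiv22 Z θ₁ θ₂ + Real.cot ((θ₁ - θ₂) / 2) * pderiv1 Z θ₁ θ₂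
        - (6 - κ) / (4 * κ) * Z θ₁ θ₂ / Real.sin ((θ₁ - θ₂) / 2) ^ 2
      = ℵ * Z θ₁ θ₂)

open Filter Topology

section DifferenceFunctions

variable (G : ℝ → ℝ) (a b : ℝ)

lemma pderiv1_comp_sub : pderiv1 (fun a b => G (b - a)) a b = -deriv G (b - a) :=
  deriv_comp_const_sub G b a

lemma pderiv2_comp_sub : pderiv2 (fun a b => G (b - a)) a b = deriv G (b - a) :=
  deriv_comp_sub_const G a b

lemma pderiv11_comp_sub :
    pderiv11 (fun a b => G (b - a)) a b = deriv (deriv G) (b - a) := by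
  simp only [pderiv11, pderiv1_comp_sub, deriv.fun_neg, deriv_comp_const_sub, neg_neg]

lemma pderiv22_comp_sub :
    pderiv22 (fun a b => G (b - a)) a b = deriv (deriv G) (b - a) := by
  simp only [pderiv22, pderiv2_comp_sub, deriv_comp_sub_const]

theorem radialBPZ₂_comp_sub_iff (κ ℵ : ℝ) :
    RadialBPZ₂ κ ℵ (fun a b => G (b - a)) ↔
      ∀ x ∈ Ioo 0 (2 * π), κ / 2 * deriv (deriv G) x + cot (x / 2) * deriv G x
        - (6 - κ) / (4 * κ) * G x / sin (x / 2) ^ 2 = ℵ * G x := by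
  simp only [RadialBPZ₂, pderiv1_comp_sub, pderiv2_comp_sub, pderiv11_comp_sub,
    pderiv22_comp_sub]
  constructor
  · intro hBPZ x hx
    simpa using (hBPZ 0 x hx.1 (by linarith [hx.2])).1
  · intro hODE θ₁ θ₂ h₁ h₂
    have hswap : (θ₁ - θ₂) / 2 = -((θ₂ - θ₁) / 2) := by ring
    have hcot : cot ((θ₁ - θ₂) / 2) = -cot ((θ₂ - θ₁) / 2) := by
      rw [cot_eq_cos_div_sin, cot_eq_cos_div_sin, hswap, cos_neg, sin_neg, div_neg]
    have hx := hODE (θ₂ - θ₁) ⟨by linarith, by linarith⟩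
    refine ⟨hx, ?_⟩
    rwa [hcot, hswap, sin_neg, neg_sq, neg_mul_neg]

end DifferenceFunctions

lemma sin_sq_quarter_mem_Ioo {x : ℝ} (hx : x ∈ Ioo 0 (2 * π)) :
    sin (x / 4) ^ 2 ∈ Ioo (0 : ℝ) 1 := by
  have := pi_pos
  have hsin : 0 < sin (x / 4) := sin_pos_of_pos_of_lt_pi (by linarith [hx.1]) (by linarith [hx.2])
  have hcos : 0 < cos (x / 4) := cos_pos_of_mem_Ioo ⟨by linarith [hx.1], by linarith [hx.2]⟩
  refine ⟨by positivity, ?_⟩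
  nlinarith [sin_sq_add_cos_sq (x / 4)]

lemma image_sin_sq_quarter_Ioo :
    (fun x => sin (x / 4) ^ 2) '' Ioo 0 (2 * π) = Ioo (0 : ℝ) 1 := by
  refine Subset.antisymm (image_subset_iff.mpr fun x hx => sin_sq_quarter_mem_Ioo hx) ?_
  rintro u ⟨hu₀, hu₁⟩
  have hsqrt₀ : 0 < √u := sqrt_pos.mpr hu₀
  have hsqrt₁ : √u < 1 := (sqrt_lt' one_pos).mpr (by rwa [one_pow])
  refine ⟨4 * arcsin √u, ⟨?_, ?_⟩, ?_⟩
  · linarith [arcsin_pos.mpr hsqrt₀]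
  · linarith [arcsin_lt_pi_div_two.mpr hsqrt₁]
  · change sin (4 * arcsin √u / 4) ^ 2 = u
    rw [mul_div_cancel_left₀ _ four_ne_zero, sin_arcsin (by linarith) hsqrt₁.le,
      sq_sqrt hu₀.le]

lemma sin_half_pos_of_mem_Ioo {x : ℝ} (hx : x ∈ Ioo 0 (2 * π)) : 0 < sin (x / 2) :=
  sin_pos_of_pos_of_lt_pi (by linarith [hx.1]) (by linarith [hx.2])

lemma hasDerivAt_sin_sq_quarter (x : ℝ) :
    HasDerivAt (fun y => sin (y / 4) ^ 2) (sin (x / 2) / 4) x := by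
  refine (((hasDerivAt_id x).div_const 4).sin.pow 2).congr_deriv ?_
  rw [show x / 2 = 2 * (x / 4) by ring, sin_two_mul]
  simp only [id, Nat.cast_ofNat]
  ring

lemma hasDerivAt_two_sin_half_rpow_mul {q x K' : ℝ} {K : ℝ → ℝ} (hx : 0 < sin (x / 2))
    (hK : HasDerivAt K K' x) :
    HasDerivAt (fun y => (2 * sin (y / 2)) ^ q * K y)
      ((2 * sin (x / 2)) ^ (q - 1) * (q * cos (x / 2) * K x + 2 * sin (x / 2) * K')) x := by
  have hS : HasDerivAt (fun y => 2 * sin (y / 2)) (cos (x / 2)) x := by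
    refine (HasDerivAt.const_mul 2 ((hasDerivAt_id x).div_const 2).sin).congr_deriv ?_
    simp only [id]
    ring
  have hpow : (2 * sin (x / 2)) ^ q = (2 * sin (x / 2)) ^ (q - 1) * (2 * sin (x / 2)) := by
    rw [← rpow_add_one (by positivity), sub_add_cancel]
  refine ((hS.rpow_const (Or.inl (by positivity))).mul hK).congr_deriv ?_
  rw [hpow]
  ring

section RadialProfile

variable (h : ℝ) (Φ : ℝ → ℝ)

noncomputable def radialProfile (x : ℝ) : ℝ :=
  (2 * sin (x / 2)) ^ (-(2 * h)) * Φ (sin (x / 4) ^ 2)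

noncomputable def radialProfileDeriv (x : ℝ) : ℝ :=
  (2 * sin (x / 2)) ^ (-(2 * h) - 1) * (-(2 * h) * cos (x / 2) * Φ (sin (x / 4) ^ 2)
    + sin (x / 2) ^ 2 / 2 * deriv Φ (sin (x / 4) ^ 2))

variable {h Φ}

lemma hasDerivAt_radialProfile {x : ℝ} (hx : 0 < sin (x / 2))
    (hΦ : DifferentiableAt ℝ Φ (sin (x / 4) ^ 2)) :
    HasDerivAt (radialProfile h Φ) (radialProfileDeriv h Φ x) x := by
  refine (hasDerivAt_two_sin_half_rpow_mul (q := -(2 * h)) hx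
    (hΦ.hasDerivAt.comp x (hasDerivAt_sin_sq_quarter x))).congr_deriv ?_
  simp only [radialProfileDeriv, Function.comp_apply]
  ring

lemma hasDerivAt_radialProfileDeriv {x : ℝ} (hx : 0 < sin (x / 2))
    (hΦ : DifferentiableAt ℝ Φ (sin (x / 4) ^ 2))
    (hΦ' : DifferentiableAt ℝ (deriv Φ) (sin (x / 4) ^ 2)) :
    HasDerivAt (radialProfileDeriv h Φ)
      ((2 * sin (x / 2)) ^ (-(2 * h) - 2)
        * ((-(2 * h) - 1) * cos (x / 2) * (-(2 * h) * cos (x / 2) * Φ (sin (x / 4) ^ 2)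
              + sin (x / 2) ^ 2 / 2 * deriv Φ (sin (x / 4) ^ 2))
          + 2 * sin (x / 2) ^ 2 * (h * Φ (sin (x / 4) ^ 2)
              + (1 - h) * cos (x / 2) / 2 * deriv Φ (sin (x / 4) ^ 2)
              + sin (x / 2) ^ 2 / 8 * deriv (deriv Φ) (sin (x / 4) ^ 2)))) x := by
  have hu := hasDerivAt_sin_sq_quarter x
  have hK : HasDerivAt (fun y => -(2 * h) * cos (y / 2) * Φ (sin (y / 4) ^ 2)
        + sin (y / 2) ^ 2 / 2 * deriv Φ (sin (y / 4) ^ 2))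
      (sin (x / 2) * (h * Φ (sin (x / 4) ^ 2)
        + (1 - h) * cos (x / 2) / 2 * deriv Φ (sin (x / 4) ^ 2)
        + sin (x / 2) ^ 2 / 8 * deriv (deriv Φ) (sin (x / 4) ^ 2))) x := by
    refine (((HasDerivAt.const_mul (-(2 * h)) ((hasDerivAt_id x).div_const 2).cos).mul
        (hΦ.hasDerivAt.comp x hu)).add
      ((((hasDerivAt_id x).div_const 2).sin.pow 2).div_const 2 |>.mul
        (hΦ'.hasDerivAt.comp x hu))).congr_deriv ?_
    simp only [id, Function.comp_apply, Pi.pow_apply, Nat.cast_ofNat]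
    ring
  refine (hasDerivAt_two_sin_half_rpow_mul (q := -(2 * h) - 1) hx hK).congr_deriv ?_
  rw [show -(2 * h) - 1 - 1 = -(2 * h) - 2 by ring]
  ring

lemma deriv_radialProfile_eventuallyEq {x : ℝ} (hx : x ∈ Ioo 0 (2 * π))
    (hΦ : ∀ u ∈ Ioo (0 : ℝ) 1, DifferentiableAt ℝ Φ u) :
    deriv (radialProfile h Φ) =ᶠ[𝓝 x] radialProfileDeriv h Φ :=
  eventually_of_mem (isOpen_Ioo.mem_nhds hx) fun _ hy =>
    (hasDerivAt_radialProfile (sin_half_pos_of_mem_Ioo hy)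
      (hΦ _ (sin_sq_quarter_mem_Ioo hy))).deriv

end RadialProfile

theorem radialOperator_radialProfile_eq_iff {κ h r x : ℝ} {Φ : ℝ → ℝ} (hκ : κ ≠ 0)
    (hh : h = (6 - κ) / (2 * κ))
    (hΦ : ∀ u ∈ Ioo (0 : ℝ) 1, DifferentiableAt ℝ Φ u ∧ DifferentiableAt ℝ (deriv Φ) u)
    (hx : x ∈ Ioo 0 (2 * π)) :
    κ / 2 * deriv (deriv (radialProfile h Φ)) x + cot (x / 2) * deriv (radialProfile h Φ) x
        - (6 - κ) / (4 * κ) * radialProfile h Φ x / sin (x / 2) ^ 2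
      = ((6 - κ) * (κ - 2) / (8 * κ) - r) * radialProfile h Φ x ↔
    sin (x / 4) ^ 2 * (1 - sin (x / 4) ^ 2) * deriv (deriv Φ) (sin (x / 4) ^ 2)
      + (3 * κ - 8) / (2 * κ) * (1 - 2 * sin (x / 4) ^ 2) * deriv Φ (sin (x / 4) ^ 2)
      + 8 * r / κ * Φ (sin (x / 4) ^ 2) = 0 := by
  have hs := sin_half_pos_of_mem_Ioo hx
  have hu := sin_sq_quarter_mem_Ioo hx
  have hcos : cos (x / 2) = 1 - 2 * sin (x / 4) ^ 2 := by
    rw [show x / 2 = 2 * (x / 4) by ring, cos_two_mul_eq_one_sub]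
  have hsin : sin (x / 2) ^ 2 = 4 * sin (x / 4) ^ 2 * (1 - sin (x / 4) ^ 2) := by
    rw [sin_sq, hcos]
    ring
  have hderiv := (hasDerivAt_radialProfile (h := h) hs (hΦ _ hu).1).deriv
  have hderiv2 := ((hasDerivAt_radialProfileDeriv (h := h) hs (hΦ _ hu).1 (hΦ _ hu).2)
    |>.congr_of_eventuallyEq (deriv_radialProfile_eventuallyEq hx fun u hu => (hΦ u hu).1)).deriv
  set u := sin (x / 4) ^ 2
  set S := 2 * sin (x / 2) with hS
  set C := S ^ (-(2 * h) - 2)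
  have hS₀ : 0 < S := by positivity
  have hpow₁ : S ^ (-(2 * h) - 1) = C * S := by
    rw [← rpow_add_one hS₀.ne']
    ring_nf
  have hpow₀ : S ^ (-(2 * h)) = C * S ^ 2 := by
    rw [sq, ← mul_assoc, ← rpow_add_one hS₀.ne', ← rpow_add_one hS₀.ne']
    ring_nf
  have hG : radialProfile h Φ x = C * (16 * u * (1 - u)) * Φ u := by
    rw [radialProfile, hpow₀, hS, mul_pow, hsin]
    ring
  have hG_div : radialProfile h Φ x / sin (x / 2) ^ 2 = 4 * C * Φ u := by
    rw [radialProfile, hpow₀, hS]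
    field_simp
    ring
  have hcot : cot (x / 2) * deriv (radialProfile h Φ) x
      = 2 * (1 - 2 * u) * C * (-(2 * h) * (1 - 2 * u) * Φ u + 2 * u * (1 - u) * deriv Φ u) := by
    rw [hderiv, radialProfileDeriv, hpow₁, hsin, cot_eq_cos_div_sin, hcos, hS]
    field_simp
    ring
  have hG'' : deriv (deriv (radialProfile h Φ)) x
      = C * ((-(2 * h) - 1) * (1 - 2 * u) * (-(2 * h) * (1 - 2 * u) * Φ u
            + 2 * u * (1 - u) * deriv Φ u)
          + 8 * u * (1 - u) * (h * Φ u + (1 - h) * (1 - 2 * u) / 2 * deriv Φ u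
            + u * (1 - u) / 2 * deriv (deriv Φ) u)) := by
    rw [hderiv2, hcos, hsin]
    ring
  have hfac : 2 * κ * u * (1 - u) * C ≠ 0 := by
    have := hu.1
    have := hu.2
    have : 0 < C := rpow_pos_of_pos hS₀ _
    positivity
  refine Iff.trans ?_ (mul_eq_zero_iff_left hfac)
  rw [← sub_eq_zero, mul_div_assoc, hG_div, hcot, hG'', hG]
  apply Iff.of_eq
  congr 1
  subst hh
  field_simp
  ring

theorem stmt0_general (κ : ℝ) (hκ0 : 0 < κ) (r : ℝ)
    (h h' : ℝ) (hh : h = (6 - κ) / (2 * κ)) (hh' : h' = (6 - κ) * (κ - 2) / (8 * κ))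
    (Φ : ℝ → ℝ)
    (hΦ : ∀ u ∈ Ioo (0:ℝ) 1, DifferentiableAt ℝ Φ u ∧ DifferentiableAt ℝ (deriv Φ) u)
    (Z : ℝ → ℝ → ℝ)
    (hZ : ∀ θ₁ θ₂ : ℝ, Z θ₁ θ₂
      = (2 * Real.sin ((θ₂ - θ₁) / 2)) ^ (-(2 * h)) * Φ (Real.sin ((θ₂ - θ₁) / 4) ^ 2)) :
    RadialBPZ₂ κ (h' - r) Z ↔
      ∀ u ∈ Ioo (0:ℝ) 1,
        u * (1 - u) * deriv (deriv Φ) u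
          + (3 * κ - 8) / (2 * κ) * (1 - 2 * u) * deriv Φ u
          + 8 * r / κ * Φ u = 0 := by
  have hZ_profile : Z = fun θ₁ θ₂ => radialProfile h Φ (θ₂ - θ₁) := funext₂ hZ
  rw [hZ_profile, radialBPZ₂_comp_sub_iff, hh', ← image_sin_sq_quarter_Ioo, forall_mem_image]
  exact forall₂_congr fun x hx => radialOperator_radialProfile_eq_iff hκ0.ne' hh hΦ hx

/-- with `h = (6−κ)/(2κ)`, `h̃ = (6−κ)(κ−2)/(8κ)`, `r ∈ ℝ`, and `Φ` twice
differentiable on `(0,1)`, the function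
`Z(θ₁,θ₂) = (2 sin((θ₂−θ₁)/2))^(−2h) · Φ(sin²((θ₂−θ₁)/4))` satisfies the radial BPZ system
with constant `ℵ = h̃ − r` iff `Φ` satisfies Euler's hypergeometric differential equation
`u(1−u)Φ'' + ((3κ−8)/(2κ))(1−2u)Φ' + (8r/κ)Φ = 0` on `(0,1)`. -/
theorem stmt0 (κ : ℝ) (hκ0 : 0 < κ) (hκ6 : κ ≤ 6) (r : ℝ)
    (h h' : ℝ) (hh : h = (6 - κ) / (2 * κ)) (hh' : h' = (6 - κ) * (κ - 2) / (8 * κ))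
    (Φ : ℝ → ℝ)
    (hΦ : ∀ u ∈ Ioo (0:ℝ) 1, DifferentiableAt ℝ Φ u ∧ DifferentiableAt ℝ (deriv Φ) u)
    (Z : ℝ → ℝ → ℝ)
    (hZ : ∀ θ₁ θ₂ : ℝ, Z θ₁ θ₂
      = (2 * Real.sin ((θ₂ - θ₁) / 2)) ^ (-(2 * h)) * Φ (Real.sin ((θ₂ - θ₁) / 4) ^ 2)) :
    RadialBPZ₂ κ (h' - r) Z ↔
      ∀ u ∈ Ioo (0:ℝ) 1,
        u * (1 - u) * deriv (deriv Φ) u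
          + (3 * κ - 8) / (2 * κ) * (1 - 2 * u) * deriv Φ u
          + 8 * r / κ * Φ u = 0 :=
  stmt0_general κ hκ0 r h h' hh hh' Φ hΦ Z hZ
end

section
/- Fix N ≥ 1 and κ ∈ (0,6], and set h = (6−κ)/(2κ) and h̃ = (6−κ)(κ−2)/(8κ). Let O = {x ∈ ℝ^{2N} : x₁ < x₂ < ⋯ < x_{2N}} and let F : O → ℝ be a smooth function satisfying: (i) the chordal BPZ equations, i.e. for each j ∈ {1,…,2N}, (κ/2)·∂ⱼ²F(x) + Σ_{ℓ≠j}[ 2·∂_ℓF(x)/(x_ℓ−x_j) − 2h·F(x)/(x_ℓ−x_j)² ] = 0 on O; and (ii) the infinitesimal Möbius covariance identities: Σⱼ ∂ⱼF(x) = 0, Σⱼ xⱼ·∂ⱼF(x) = −2Nh·F(x), and Σⱼ xⱼ²·∂ⱼF(x) = −2h·(Σⱼ xⱼ)·F(x) on O. Define G on the region {θ ∈ ℝ^{2N} : −π < θ₁ < θ₂ < ⋯ < θ_{2N} < π} by G(θ₁,…,θ_{2N}) = Πⱼ ((1/2)·(1 + tan²(θⱼ/2)))^h · F(tan(θ₁/2),…,tan(θ_{2N}/2)).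 Then G satisfies the radial BPZ system with constant ℵ = h̃: for each j ∈ {1,…,2N}, (κ/2)·∂ⱼ²G(θ) + Σ_{ℓ≠j}[ cot((θ_ℓ−θ_j)/2)·∂_ℓG(θ) − ((6−κ)/(4κ))·G(θ)/sin²((θ_ℓ−θ_j)/2) ] = h̃·G(θ). -/
open Real Set

set_option maxHeartbeats 2000000



/-- Partial derivative of `F : ℝ^n → ℝ` in the `j`-th coordinate. -/
noncomputable def pd {n : ℕ} (F : (Fin n → ℝ) → ℝ) (j : Fin n) (x : Fin n → ℝ) : ℝ :=
  deriv (fun s => F (Function.update x j s)) (x j)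

/-- Second partial derivative of `F : ℝ^n → ℝ` in the `j`-th coordinate. -/
noncomputable def pd2 {n : ℕ} (F : (Fin n → ℝ) → ℝ) (j : Fin n) (x : Fin n → ℝ) : ℝ :=
  pd (fun y => pd F j y) j x

section SLEaux
open Real Set Function

lemma isOpen_strictMono_set (n : ℕ) : IsOpen {x : Fin n → ℝ | StrictMono x} := by
  have : {x : Fin n → ℝ | StrictMono x}
      = ⋂ p : Fin n × Fin n, {x : Fin n → ℝ | p.1 < p.2 → x p.1 < x p.2} := by
    ext x
    simp only [mem_setOf_eq, mem_iInter, Prod.forall]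
    exact ⟨fun hx a b hab => hx hab, fun hx a b hab => hx a b hab⟩
  rw [this]
  refine isOpen_iInter_of_finite fun p => ?_
  by_cases hp : p.1 < p.2
  · simp only [hp, forall_true_left]
    exact isOpen_lt (continuous_apply p.1) (continuous_apply p.2)
  · simp only [hp, false_implies, setOf_true]
    exact isOpen_univ

lemma contDiff_update_line {n : ℕ} (x : Fin n → ℝ) (j : Fin n) :
    ContDiff ℝ (⊤ : ℕ∞) (fun s : ℝ => Function.update x j s) := by
  rw [contDiff_pi]
  intro i
  by_cases hij : i = j
  · subst hij
    simpa [Function.update_apply] using contDiff_fun_id (𝕜 := ℝ) (E := ℝ)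
  · simpa [Function.update_apply, hij] using contDiff_const (c := x i) (𝕜 := ℝ) (E := ℝ)

lemma section_smooth {n : ℕ} {F : (Fin n → ℝ) → ℝ} {O : Set (Fin n → ℝ)}
    (hF : ContDiffOn ℝ (⊤ : ℕ∞) F O) (x : Fin n → ℝ) (j : Fin n) :
    ContDiffOn ℝ (⊤ : ℕ∞) (fun s : ℝ => F (Function.update x j s))
      ((fun s : ℝ => Function.update x j s) ⁻¹' O) := by
  exact hF.comp (contDiff_update_line x j).contDiffOn (Set.mapsTo_preimage _ O)

lemma cos_half_ne_zero {s : ℝ} (hs : s ∈ Ioo (-π) π) : Real.cos (s / 2) ≠ 0 := by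
  have : 0 < Real.cos (s / 2) := by
    apply Real.cos_pos_of_mem_Ioo
    constructor <;> [linarith [hs.1]; linarith [hs.2]]
  exact this.ne'

lemma hasDerivAt_tan_half {s : ℝ} (hs : s ∈ Ioo (-π) π) :
    HasDerivAt (fun r : ℝ => Real.tan (r / 2))
      (1 / 2 * (1 + Real.tan (s / 2) ^ 2)) s := by
  have hc := cos_half_ne_zero hs
  have h1 : HasDerivAt (fun r : ℝ => r / 2) (1 / 2 : ℝ) s := by
    simpa using (hasDerivAt_id s).div_const 2
  have h2 := (Real.hasDerivAt_tan hc).comp s h1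
  refine h2.congr_deriv ?_
  have h3 := Real.inv_one_add_tan_sq hc
  rw [inv_eq_iff_eq_inv] at h3
  rw [h3, one_div]
  ring

lemma pp_pos (s : ℝ) : (0:ℝ) < 1 / 2 * (1 + Real.tan (s / 2) ^ 2) := by positivity

lemma hasDerivAt_pp {s : ℝ} (hs : s ∈ Ioo (-π) π) :
    HasDerivAt (fun r : ℝ => 1 / 2 * (1 + Real.tan (r / 2) ^ 2))
      (Real.tan (s / 2) * (1 / 2 * (1 + Real.tan (s / 2) ^ 2))) s := by
  have h1 := (hasDerivAt_tan_half hs).pow 2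
  have h2 := (h1.const_add 1).const_mul (1/2 : ℝ)
  refine h2.congr_deriv ?_
  ring

lemma hasDerivAt_pp_rpow (h : ℝ) {s : ℝ} (hs : s ∈ Ioo (-π) π) :
    HasDerivAt (fun r : ℝ => (1 / 2 * (1 + Real.tan (r / 2) ^ 2)) ^ h)
      (h * Real.tan (s / 2) * (1 / 2 * (1 + Real.tan (s / 2) ^ 2)) ^ h) s := by
  have hp := pp_pos s
  have h1 := (hasDerivAt_pp hs).rpow_const (p := h) (Or.inl hp.ne')
  convert h1 using 1
  rw [Real.rpow_sub_one hp.ne']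
  field_simp

lemma strictMono_tan_half {n : ℕ} {θ : Fin n → ℝ} (hI : ∀ i, θ i ∈ Ioo (-π) π)
    (hm : StrictMono θ) : StrictMono (fun i => Real.tan (θ i / 2)) := by
  intro a b hab
  have ha := hI a
  have hb := hI b
  exact Real.strictMonoOn_tan
    ⟨by simpa using by linarith [ha.1], by linarith [ha.2]⟩
    ⟨by simpa using by linarith [hb.1], by linarith [hb.2]⟩
    (by linarith [hm hab])

lemma sin_half_sub {a b : ℝ} (ha : Real.cos (a/2) ≠ 0) (hb : Real.cos (b/2) ≠ 0) :
    Real.sin ((a - b)/2)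
      = Real.cos (a/2) * Real.cos (b/2) * (Real.tan (a/2) - Real.tan (b/2)) := by
  have hab : (a-b)/2 = a/2 - b/2 := by ring
  rw [hab, Real.sin_sub, Real.tan_eq_sin_div_cos, Real.tan_eq_sin_div_cos]
  field_simp

lemma cos_half_sub {a b : ℝ} (ha : Real.cos (a/2) ≠ 0) (hb : Real.cos (b/2) ≠ 0) :
    Real.cos ((a - b)/2)
      = Real.cos (a/2) * Real.cos (b/2) * (1 + Real.tan (a/2) * Real.tan (b/2)) := by
  have hab : (a-b)/2 = a/2 - b/2 := by ring
  rw [hab, Real.cos_sub, Real.tan_eq_sin_div_cos, Real.tan_eq_sin_div_cos]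
  field_simp

lemma tan_update {n : ℕ} (θ : Fin n → ℝ) (ℓ : Fin n) (r : ℝ) :
    (fun j => Real.tan (Function.update θ ℓ r j / 2))
      = Function.update (fun j => Real.tan (θ j / 2)) ℓ (Real.tan (r / 2)) := by
  funext i
  by_cases hi : i = ℓ
  · subst hi; simp
  · simp [Function.update_apply, hi]

lemma G_section {n : ℕ} (G F : (Fin n → ℝ) → ℝ) (h : ℝ)
    (hG : ∀ θ : Fin n → ℝ,
      G θ = (∏ j, ((1 / 2) * (1 + Real.tan (θ j / 2) ^ 2)) ^ h)
        * F (fun j => Real.tan (θ j / 2)))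
    (θ : Fin n → ℝ) (ℓ : Fin n) (r : ℝ) :
    G (Function.update θ ℓ r)
      = (∏ i ∈ Finset.univ.erase ℓ, ((1 / 2) * (1 + Real.tan (θ i / 2) ^ 2)) ^ h)
        * (((1 / 2) * (1 + Real.tan (r / 2) ^ 2)) ^ h
          * F (Function.update (fun j => Real.tan (θ j / 2)) ℓ (Real.tan (r / 2)))) := by
  rw [hG, tan_update]
  have h2 : (∏ j, ((1 / 2) * (1 + Real.tan (Function.update θ ℓ r j / 2) ^ 2)) ^ h)
      = ((1 / 2) * (1 + Real.tan (r / 2) ^ 2)) ^ h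
        * ∏ i ∈ Finset.univ.erase ℓ, ((1 / 2) * (1 + Real.tan (θ i / 2) ^ 2)) ^ h := by
    have h3 : (fun j => ((1 / 2) * (1 + Real.tan (Function.update θ ℓ r j / 2) ^ 2)) ^ h)
        = Function.update (fun j => ((1 / 2) * (1 + Real.tan (θ j / 2) ^ 2)) ^ h) ℓ
            (((1 / 2) * (1 + Real.tan (r / 2) ^ 2)) ^ h) := by
      funext i
      by_cases hi : i = ℓ
      · subst hi; simp
      · simp [Function.update_apply, hi]
    rw [h3, Finset.prod_update_of_mem (Finset.mem_univ ℓ), Finset.erase_eq]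
  rw [h2]
  ring

lemma hasDerivAt_G_section {n : ℕ} (G F : (Fin n → ℝ) → ℝ) (h : ℝ)
    (hG : ∀ θ : Fin n → ℝ,
      G θ = (∏ j, ((1 / 2) * (1 + Real.tan (θ j / 2) ^ 2)) ^ h)
        * F (fun j => Real.tan (θ j / 2)))
    (θ : Fin n → ℝ) (ℓ : Fin n) {s : ℝ} (hs : s ∈ Ioo (-π) π) (d : ℝ)
    (hd : HasDerivAt (fun r => F (Function.update (fun j => Real.tan (θ j / 2)) ℓ r)) d
      (Real.tan (s / 2))) :
    HasDerivAt (fun r => G (Function.update θ ℓ r))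
      ((∏ i ∈ Finset.univ.erase ℓ, ((1 / 2) * (1 + Real.tan (θ i / 2) ^ 2)) ^ h)
        * (((1 / 2) * (1 + Real.tan (s / 2) ^ 2)) ^ h
          * (h * Real.tan (s / 2)
              * F (Function.update (fun j => Real.tan (θ j / 2)) ℓ (Real.tan (s / 2)))
            + (1 / 2) * (1 + Real.tan (s / 2) ^ 2) * d))) s := by
  have hfun : (fun r => G (Function.update θ ℓ r))
      = fun r => (∏ i ∈ Finset.univ.erase ℓ, ((1 / 2) * (1 + Real.tan (θ i / 2) ^ 2)) ^ h)
        * (((1 / 2) * (1 + Real.tan (r / 2) ^ 2)) ^ h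
          * F (Function.update (fun j => Real.tan (θ j / 2)) ℓ (Real.tan (r / 2)))) :=
    funext fun r => G_section G F h hG θ ℓ r
  rw [hfun]
  have h1 := hasDerivAt_pp_rpow h hs
  have h2 := hd.comp s (hasDerivAt_tan_half hs)
  have h3 := (h1.mul h2).const_mul
    (∏ i ∈ Finset.univ.erase ℓ, ((1 / 2) * (1 + Real.tan (θ i / 2) ^ 2)) ^ h)
  simp only [Function.comp_apply] at h3
  refine h3.congr_deriv ?_
  ring

lemma hasDerivAt_pd {n : ℕ} {F : (Fin n → ℝ) → ℝ}
    (hsmooth : ContDiffOn ℝ (⊤ : ℕ∞) F {x : Fin n → ℝ | StrictMono x})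
    (ℓ : Fin n) (y : Fin n → ℝ) (hy : StrictMono y) :
    HasDerivAt (fun r => F (Function.update y ℓ r)) (pd F ℓ y) (y ℓ) := by
  have hopen : IsOpen ((fun s : ℝ => Function.update y ℓ s) ⁻¹' {x : Fin n → ℝ | StrictMono x}) :=
    (isOpen_strictMono_set n).preimage (contDiff_update_line y ℓ).continuous
  have hmem : y ℓ ∈ ((fun s : ℝ => Function.update y ℓ s) ⁻¹' {x : Fin n → ℝ | StrictMono x}) := by
    simp only [Set.mem_preimage, Function.update_eq_self, Set.mem_setOf_eq]
    exact hy
  have hdiff : DifferentiableAt ℝ (fun s => F (Function.update y ℓ s)) (y ℓ) :=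
    ((section_smooth hsmooth y ℓ).contDiffAt (hopen.mem_nhds hmem)).differentiableAt (by simp)
  exact hdiff.hasDerivAt

lemma pd2_eq_deriv_deriv {n : ℕ} (F : (Fin n → ℝ) → ℝ) (j : Fin n) (x : Fin n → ℝ) :
    pd2 F j x = deriv (deriv (fun s => F (Function.update x j s))) (x j) := by
  have h4 : (fun s => pd F j (Function.update x j s))
      = deriv (fun s => F (Function.update x j s)) := by
    funext s
    simp only [pd, Function.update_idem, Function.update_self]
  show deriv (fun s => pd F j (Function.update x j s)) (x j) = _
  rw [h4]

end SLEaux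

/-- if the smooth function `F` on `O = {x₁ < ⋯ < x_{2N}}` satisfies the chordal
BPZ equations and the infinitesimal Möbius covariance identities (with conformal weight
`h = (6−κ)/(2κ)` at each point), then the function
`G(θ) = Πⱼ ((1/2)(1 + tan²(θⱼ/2)))^h · F(tan(θ₁/2),…,tan(θ_{2N}/2))`
defined for `−π < θ₁ < ⋯ < θ_{2N} < π` satisfies the radial BPZ system with constant
`ℵ = h̃ = (6−κ)(κ−2)/(8κ)`. -/
theorem stmt4 (N : ℕ) (hN : 1 ≤ N) (κ : ℝ) (hκ0 : 0 < κ) (hκ6 : κ ≤ 6)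
    (h h' : ℝ) (hh : h = (6 - κ) / (2 * κ)) (hh' : h' = (6 - κ) * (κ - 2) / (8 * κ))
    (F : (Fin (2 * N) → ℝ) → ℝ)
    (hsmooth : ContDiffOn ℝ (⊤ : ℕ∞) F {x : Fin (2 * N) → ℝ | StrictMono x})
    -- (i) chordal BPZ equations on O
    (hBPZ : ∀ x : Fin (2 * N) → ℝ, StrictMono x → ∀ j : Fin (2 * N),
      κ / 2 * pd2 F j x
        + ∑ ℓ ∈ Finset.univ.erase j,
            (2 * pd F ℓ x / (x ℓ - x j) - 2 * h * F x / (x ℓ - x j) ^ 2) = 0)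
    -- (ii) infinitesimal Möbius covariance identities on O
    (hMob1 : ∀ x : Fin (2 * N) → ℝ, StrictMono x → ∑ j, pd F j x = 0)
    (hMob2 : ∀ x : Fin (2 * N) → ℝ, StrictMono x →
      ∑ j, x j * pd F j x = -(2 * (N : ℝ) * h) * F x)
    (hMob3 : ∀ x : Fin (2 * N) → ℝ, StrictMono x →
      ∑ j, (x j) ^ 2 * pd F j x = -(2 * h) * (∑ j, x j) * F x)
    (G : (Fin (2 * N) → ℝ) → ℝ)
    (hG : ∀ θ : Fin (2 * N) → ℝ,
      G θ = (∏ j, ((1 / 2) * (1 + Real.tan (θ j / 2) ^ 2)) ^ h)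
        * F (fun j => Real.tan (θ j / 2))) :
    ∀ θ : Fin (2 * N) → ℝ, (∀ i, -π < θ i ∧ θ i < π) → StrictMono θ →
      ∀ j : Fin (2 * N),
        κ / 2 * pd2 G j θ
          + ∑ ℓ ∈ Finset.univ.erase j,
              (Real.cot ((θ ℓ - θ j) / 2) * pd G ℓ θ
                - (6 - κ) / (4 * κ) * G θ / Real.sin ((θ ℓ - θ j) / 2) ^ 2)
          = h' * G θ := by
  intro θ hθI0 hθm j
  classical
  have hκ : κ ≠ 0 := hκ0.ne'
  have hθI : ∀ i, θ i ∈ Ioo (-π) π := fun i => ⟨(hθI0 i).1, (hθI0 i).2⟩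
  have hxO : StrictMono (fun i => Real.tan (θ i / 2)) := strictMono_tan_half hθI hθm
  -- first derivatives of G
  have hA : ∀ ℓ : Fin (2 * N), pd G ℓ θ
      = (∏ i, ((1 / 2) * (1 + Real.tan (θ i / 2) ^ 2)) ^ h)
        * (h * Real.tan (θ ℓ / 2) * F (fun i => Real.tan (θ i / 2))
          + (1 / 2) * (1 + Real.tan (θ ℓ / 2) ^ 2)
            * pd F ℓ (fun i => Real.tan (θ i / 2))) := by
    intro ℓ
    have hd0 := hasDerivAt_pd hsmooth ℓ _ hxO
    have hder := hasDerivAt_G_section G F h hG θ ℓ (hθI ℓ) _ hd0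
    have heq := hder.deriv
    have hupd : Function.update (fun i => Real.tan (θ i / 2)) ℓ (Real.tan (θ ℓ / 2))
        = (fun i => Real.tan (θ i / 2)) := Function.update_eq_self ℓ _
    rw [hupd] at heq
    show deriv (fun s => G (Function.update θ ℓ s)) (θ ℓ) = _
    rw [heq, ← Finset.mul_prod_erase Finset.univ _ (Finset.mem_univ ℓ)]
    ring
  have hGθ : G θ = (∏ i, ((1 / 2) * (1 + Real.tan (θ i / 2) ^ 2)) ^ h)
      * F (fun i => Real.tan (θ i / 2)) := hG θ
  -- second derivative of G in the j-th direction
  have hVopen : IsOpen ((fun r : ℝ => Function.update (fun i => Real.tan (θ i / 2)) j r) ⁻¹'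
      {y : Fin (2 * N) → ℝ | StrictMono y}) :=
    (isOpen_strictMono_set _).preimage (contDiff_update_line _ j).continuous
  have hupdj : Function.update (fun i => Real.tan (θ i / 2)) j (Real.tan (θ j / 2))
      = (fun i => Real.tan (θ i / 2)) := Function.update_eq_self j _
  have hVmem : Real.tan (θ j / 2) ∈ ((fun r : ℝ =>
      Function.update (fun i => Real.tan (θ i / 2)) j r) ⁻¹'
      {y : Fin (2 * N) → ℝ | StrictMono y}) := by
    simp only [Set.mem_preimage, Set.mem_setOf_eq]
    rw [hupdj]
    exact hxO
  have hfj2 : ContDiffOn ℝ 2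
      (fun r => F (Function.update (fun i => Real.tan (θ i / 2)) j r))
      ((fun r : ℝ => Function.update (fun i => Real.tan (θ i / 2)) j r) ⁻¹'
        {y : Fin (2 * N) → ℝ | StrictMono y}) :=
    (section_smooth hsmooth _ j).of_le (WithTop.coe_le_coe.mpr le_top)
  have hfj1 : ContDiffOn ℝ 1
      (deriv (fun r => F (Function.update (fun i => Real.tan (θ i / 2)) j r)))
      ((fun r : ℝ => Function.update (fun i => Real.tan (θ i / 2)) j r) ⁻¹'
        {y : Fin (2 * N) → ℝ | StrictMono y}) :=
    hfj2.deriv_of_isOpen hVopen (by norm_num)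
  have hfj'd : HasDerivAt
      (deriv (fun r => F (Function.update (fun i => Real.tan (θ i / 2)) j r)))
      (pd2 F j (fun i => Real.tan (θ i / 2))) (Real.tan (θ j / 2)) := by
    have hdiff : DifferentiableAt ℝ
        (deriv (fun r => F (Function.update (fun i => Real.tan (θ i / 2)) j r)))
        (Real.tan (θ j / 2)) :=
      (hfj1.contDiffAt (hVopen.mem_nhds hVmem)).differentiableAt one_ne_zero
    have h3 : pd2 F j (fun i => Real.tan (θ i / 2))
        = deriv (deriv (fun r => F (Function.update (fun i => Real.tan (θ i / 2)) j r)))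
            (Real.tan (θ j / 2)) := pd2_eq_deriv_deriv F j _
    rw [h3]
    exact hdiff.hasDerivAt
  have hpj := hθI j
  have htand := hasDerivAt_tan_half hpj
  have hfjd := hasDerivAt_pd hsmooth j _ hxO
  have hda : HasDerivAt (fun r : ℝ => h * Real.tan (r / 2)
        * F (Function.update (fun i => Real.tan (θ i / 2)) j (Real.tan (r / 2))))
      (h * (1 / 2 * (1 + Real.tan (θ j / 2) ^ 2))
          * F (Function.update (fun i => Real.tan (θ i / 2)) j (Real.tan (θ j / 2)))
        + h * Real.tan (θ j / 2) * (pd F j (fun i => Real.tan (θ i / 2))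
            * (1 / 2 * (1 + Real.tan (θ j / 2) ^ 2)))) (θ j) :=
    (htand.const_mul h).mul (hfjd.comp (θ j) htand :)
  have hdb : HasDerivAt (fun r : ℝ => 1 / 2 * (1 + Real.tan (r / 2) ^ 2)
        * deriv (fun w => F (Function.update (fun i => Real.tan (θ i / 2)) j w))
            (Real.tan (r / 2)))
      (Real.tan (θ j / 2) * (1 / 2 * (1 + Real.tan (θ j / 2) ^ 2))
          * deriv (fun w => F (Function.update (fun i => Real.tan (θ i / 2)) j w))
              (Real.tan (θ j / 2))
        + 1 / 2 * (1 + Real.tan (θ j / 2) ^ 2)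
          * (pd2 F j (fun i => Real.tan (θ i / 2))
            * (1 / 2 * (1 + Real.tan (θ j / 2) ^ 2)))) (θ j) :=
    (hasDerivAt_pp hpj).mul (hfj'd.comp (θ j) htand :)
  have hphi : HasDerivAt (fun s : ℝ =>
      (∏ i ∈ Finset.univ.erase j, ((1 / 2) * (1 + Real.tan (θ i / 2) ^ 2)) ^ h)
        * (((1 / 2) * (1 + Real.tan (s / 2) ^ 2)) ^ h
          * (h * Real.tan (s / 2)
              * F (Function.update (fun i => Real.tan (θ i / 2)) j (Real.tan (s / 2)))
            + (1 / 2) * (1 + Real.tan (s / 2) ^ 2)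
              * deriv (fun w => F (Function.update (fun i => Real.tan (θ i / 2)) j w))
                  (Real.tan (s / 2)))))
      ((∏ i ∈ Finset.univ.erase j, ((1 / 2) * (1 + Real.tan (θ i / 2) ^ 2)) ^ h)
        * (h * Real.tan (θ j / 2) * (1 / 2 * (1 + Real.tan (θ j / 2) ^ 2)) ^ h
            * (h * Real.tan (θ j / 2)
                * F (Function.update (fun i => Real.tan (θ i / 2)) j (Real.tan (θ j / 2)))
              + 1 / 2 * (1 + Real.tan (θ j / 2) ^ 2)
                * deriv (fun w => F (Function.update (fun i => Real.tan (θ i / 2)) j w))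
                    (Real.tan (θ j / 2)))
          + (1 / 2 * (1 + Real.tan (θ j / 2) ^ 2)) ^ h
            * ((h * (1 / 2 * (1 + Real.tan (θ j / 2) ^ 2))
                  * F (Function.update (fun i => Real.tan (θ i / 2)) j (Real.tan (θ j / 2)))
                + h * Real.tan (θ j / 2) * (pd F j (fun i => Real.tan (θ i / 2))
                    * (1 / 2 * (1 + Real.tan (θ j / 2) ^ 2))))
              + (Real.tan (θ j / 2) * (1 / 2 * (1 + Real.tan (θ j / 2) ^ 2))
                  * deriv (fun w => F (Function.update (fun i => Real.tan (θ i / 2)) j w))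
                      (Real.tan (θ j / 2))
                + 1 / 2 * (1 + Real.tan (θ j / 2) ^ 2)
                  * (pd2 F j (fun i => Real.tan (θ i / 2))
                    * (1 / 2 * (1 + Real.tan (θ j / 2) ^ 2))))))) (θ j) :=
    ((hasDerivAt_pp_rpow h hpj).mul (hda.add hdb)).const_mul _
  have hUopen : IsOpen (Ioo (-π) π ∩ ((fun s : ℝ => Function.update θ j s) ⁻¹'
      {y : Fin (2 * N) → ℝ | StrictMono y})) :=
    isOpen_Ioo.inter ((isOpen_strictMono_set _).preimage (contDiff_update_line θ j).continuous)
  have hθjU : θ j ∈ Ioo (-π) π ∩ ((fun s : ℝ => Function.update θ j s) ⁻¹'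
      {y : Fin (2 * N) → ℝ | StrictMono y}) := by
    refine ⟨hpj, ?_⟩
    simp only [Set.mem_preimage, Set.mem_setOf_eq, Function.update_eq_self]
    exact hθm
  have hU : ∀ s ∈ Ioo (-π) π ∩ ((fun s : ℝ => Function.update θ j s) ⁻¹'
      {y : Fin (2 * N) → ℝ | StrictMono y}),
      deriv (fun r => G (Function.update θ j r)) s
        = (∏ i ∈ Finset.univ.erase j, ((1 / 2) * (1 + Real.tan (θ i / 2) ^ 2)) ^ h)
          * (((1 / 2) * (1 + Real.tan (s / 2) ^ 2)) ^ h
            * (h * Real.tan (s / 2)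
                * F (Function.update (fun i => Real.tan (θ i / 2)) j (Real.tan (s / 2)))
              + (1 / 2) * (1 + Real.tan (s / 2) ^ 2)
                * deriv (fun w => F (Function.update (fun i => Real.tan (θ i / 2)) j w))
                    (Real.tan (s / 2)))) := by
    rintro s ⟨hs1, hs2⟩
    have hs2' : StrictMono (Function.update θ j s) := hs2
    have hyI : ∀ i, (Function.update θ j s) i ∈ Ioo (-π) π := by
      intro i
      by_cases hi : i = j
      · subst hi; simpa using hs1
      · rw [Function.update_apply, if_neg hi]
        exact hθI i
    have hy0 : StrictMono (fun i => Real.tan (Function.update θ j s i / 2)) :=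
      strictMono_tan_half hyI hs2'
    rw [tan_update θ j s] at hy0
    have hd0 := hasDerivAt_pd hsmooth j _ hy0
    have hfeq : (fun r => F (Function.update (Function.update (fun i => Real.tan (θ i / 2)) j
          (Real.tan (s / 2))) j r))
        = (fun r => F (Function.update (fun i => Real.tan (θ i / 2)) j r)) := by
      funext r
      rw [Function.update_idem]
    have hpt : (Function.update (fun i => Real.tan (θ i / 2)) j (Real.tan (s / 2))) j
        = Real.tan (s / 2) := Function.update_self j _ _
    have hpd_eq : pd F j (Function.update (fun i => Real.tan (θ i / 2)) j (Real.tan (s / 2)))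
        = deriv (fun w => F (Function.update (fun i => Real.tan (θ i / 2)) j w))
            (Real.tan (s / 2)) := by
      simp only [pd, Function.update_idem, Function.update_self]
    rw [hfeq, hpt, hpd_eq] at hd0
    exact (hasDerivAt_G_section G F h hG θ j hs1 _ hd0).deriv
  have hEv : deriv (fun r => G (Function.update θ j r)) =ᶠ[nhds (θ j)] (fun s : ℝ =>
      (∏ i ∈ Finset.univ.erase j, ((1 / 2) * (1 + Real.tan (θ i / 2) ^ 2)) ^ h)
        * (((1 / 2) * (1 + Real.tan (s / 2) ^ 2)) ^ h
          * (h * Real.tan (s / 2)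
              * F (Function.update (fun i => Real.tan (θ i / 2)) j (Real.tan (s / 2)))
            + (1 / 2) * (1 + Real.tan (s / 2) ^ 2)
              * deriv (fun w => F (Function.update (fun i => Real.tan (θ i / 2)) j w))
                  (Real.tan (s / 2))))) :=
    Filter.eventuallyEq_of_mem (hUopen.mem_nhds hθjU) hU
  have hderivfj : deriv (fun w => F (Function.update (fun i => Real.tan (θ i / 2)) j w))
      (Real.tan (θ j / 2)) = pd F j (fun i => Real.tan (θ i / 2)) := rfl
  have hB : pd2 G j θ = (∏ i, ((1 / 2) * (1 + Real.tan (θ i / 2) ^ 2)) ^ h)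
      * ((h ^ 2 * Real.tan (θ j / 2) ^ 2 + h * (1 / 2 * (1 + Real.tan (θ j / 2) ^ 2)))
            * F (fun i => Real.tan (θ i / 2))
          + (2 * h + 1) * Real.tan (θ j / 2) * (1 / 2 * (1 + Real.tan (θ j / 2) ^ 2))
            * pd F j (fun i => Real.tan (θ i / 2))
          + (1 / 2 * (1 + Real.tan (θ j / 2) ^ 2)) ^ 2
            * pd2 F j (fun i => Real.tan (θ i / 2))) := by
    rw [pd2_eq_deriv_deriv G j θ, hEv.deriv_eq, hphi.deriv, hupdj, hderivfj,
      ← Finset.mul_prod_erase Finset.univ _ (Finset.mem_univ j)]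
    ring
  -- algebraic identities at the marked points
  have hbpz := hBPZ (fun i => Real.tan (θ i / 2)) hxO j
  beta_reduce at hbpz
  have hm1 := hMob1 (fun i => Real.tan (θ i / 2)) hxO
  have hm2 := hMob2 (fun i => Real.tan (θ i / 2)) hxO
  have hm3 := hMob3 (fun i => Real.tan (θ i / 2)) hxO
  beta_reduce at hm1 hm2 hm3
  have hterm : ∀ ℓ ∈ Finset.univ.erase j,
      Real.cot ((θ ℓ - θ j) / 2) * pd G ℓ θ
          - (6 - κ) / (4 * κ) * G θ / Real.sin ((θ ℓ - θ j) / 2) ^ 2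
        = (∏ i, ((1 / 2) * (1 + Real.tan (θ i / 2) ^ 2)) ^ h)
          * (Real.tan (θ j / 2) / 2
                * (Real.tan (θ ℓ / 2) ^ 2 * pd F ℓ (fun i => Real.tan (θ i / 2)))
            + (1 + Real.tan (θ j / 2) ^ 2) / 2
                * (Real.tan (θ ℓ / 2) * pd F ℓ (fun i => Real.tan (θ i / 2)))
            + Real.tan (θ j / 2) * (2 + Real.tan (θ j / 2) ^ 2) / 2
                * pd F ℓ (fun i => Real.tan (θ i / 2))
            + h * Real.tan (θ j / 2) * F (fun i => Real.tan (θ i / 2)) * Real.tan (θ ℓ / 2)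
            + h * (1 + Real.tan (θ j / 2) ^ 2) / 2 * F (fun i => Real.tan (θ i / 2))
            + (1 / 2 * (1 + Real.tan (θ j / 2) ^ 2)) ^ 2
                * (2 * pd F ℓ (fun i => Real.tan (θ i / 2))
                      / (Real.tan (θ ℓ / 2) - Real.tan (θ j / 2))
                  - 2 * h * F (fun i => Real.tan (θ i / 2))
                      / (Real.tan (θ ℓ / 2) - Real.tan (θ j / 2)) ^ 2)) := by
    intro ℓ hℓ
    have hℓj : ℓ ≠ j := Finset.ne_of_mem_erase hℓ
    have hcl := cos_half_ne_zero (hθI ℓ)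
    have hcj := cos_half_ne_zero (hθI j)
    have hne : Real.tan (θ ℓ / 2) - Real.tan (θ j / 2) ≠ 0 := by
      refine sub_ne_zero.mpr fun hcon => hℓj ?_
      exact hxO.injective hcon
    have hcot : Real.cot ((θ ℓ - θ j) / 2)
        = (1 + Real.tan (θ ℓ / 2) * Real.tan (θ j / 2))
          / (Real.tan (θ ℓ / 2) - Real.tan (θ j / 2)) := by
      rw [Real.cot_eq_cos_div_sin, cos_half_sub hcl hcj, sin_half_sub hcl hcj,
        mul_div_mul_left _ _ (mul_ne_zero hcl hcj)]
    have hsin2 : Real.sin ((θ ℓ - θ j) / 2) ^ 2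
        = (Real.tan (θ ℓ / 2) - Real.tan (θ j / 2)) ^ 2
          / ((1 + Real.tan (θ ℓ / 2) ^ 2) * (1 + Real.tan (θ j / 2) ^ 2)) := by
      rw [sin_half_sub hcl hcj, mul_pow, mul_pow,
        ← Real.inv_one_add_tan_sq hcl, ← Real.inv_one_add_tan_sq hcj]
      field_simp
    have h1l : (1 : ℝ) + Real.tan (θ ℓ / 2) ^ 2 ≠ 0 := by positivity
    have h1j : (1 : ℝ) + Real.tan (θ j / 2) ^ 2 ≠ 0 := by positivity
    rw [hA ℓ, hGθ, hcot, hsin2, hh]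
    field_simp
    ring
  rw [show (∑ ℓ ∈ Finset.univ.erase j,
        (Real.cot ((θ ℓ - θ j) / 2) * pd G ℓ θ
          - (6 - κ) / (4 * κ) * G θ / Real.sin ((θ ℓ - θ j) / 2) ^ 2))
      = ∑ ℓ ∈ Finset.univ.erase j,
        ((∏ i, ((1 / 2) * (1 + Real.tan (θ i / 2) ^ 2)) ^ h)
          * (Real.tan (θ j / 2) / 2
                * (Real.tan (θ ℓ / 2) ^ 2 * pd F ℓ (fun i => Real.tan (θ i / 2)))
            + (1 + Real.tan (θ j / 2) ^ 2) / 2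
                * (Real.tan (θ ℓ / 2) * pd F ℓ (fun i => Real.tan (θ i / 2)))
            + Real.tan (θ j / 2) * (2 + Real.tan (θ j / 2) ^ 2) / 2
                * pd F ℓ (fun i => Real.tan (θ i / 2))
            + h * Real.tan (θ j / 2) * F (fun i => Real.tan (θ i / 2)) * Real.tan (θ ℓ / 2)
            + h * (1 + Real.tan (θ j / 2) ^ 2) / 2 * F (fun i => Real.tan (θ i / 2))
            + (1 / 2 * (1 + Real.tan (θ j / 2) ^ 2)) ^ 2
                * (2 * pd F ℓ (fun i => Real.tan (θ i / 2))
                      / (Real.tan (θ ℓ / 2) - Real.tan (θ j / 2))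
                  - 2 * h * F (fun i => Real.tan (θ i / 2))
                      / (Real.tan (θ ℓ / 2) - Real.tan (θ j / 2)) ^ 2)))
    from Finset.sum_congr rfl hterm, ← Finset.mul_sum, hB, hGθ]
  have hcard : ((Finset.univ.erase j).card : ℝ) = 2 * (N : ℝ) - 1 := by
    rw [Finset.card_erase_of_mem (Finset.mem_univ j), Finset.card_univ, Fintype.card_fin]
    have h1 : 1 ≤ 2 * N := by omega
    rw [Nat.cast_sub h1]
    push_cast
    ring
  have hT : ∑ ℓ ∈ Finset.univ.erase j,
      (2 * pd F ℓ (fun i => Real.tan (θ i / 2))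
          / (Real.tan (θ ℓ / 2) - Real.tan (θ j / 2))
        - 2 * h * F (fun i => Real.tan (θ i / 2))
          / (Real.tan (θ ℓ / 2) - Real.tan (θ j / 2)) ^ 2)
      = -(κ / 2 * pd2 F j (fun i => Real.tan (θ i / 2))) := by
    linarith [hbpz]
  have hkey : κ / 2
        * ((h ^ 2 * Real.tan (θ j / 2) ^ 2 + h * (1 / 2 * (1 + Real.tan (θ j / 2) ^ 2)))
            * F (fun i => Real.tan (θ i / 2))
          + (2 * h + 1) * Real.tan (θ j / 2) * (1 / 2 * (1 + Real.tan (θ j / 2) ^ 2))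
            * pd F j (fun i => Real.tan (θ i / 2))
          + (1 / 2 * (1 + Real.tan (θ j / 2) ^ 2)) ^ 2
            * pd2 F j (fun i => Real.tan (θ i / 2)))
      + (∑ ℓ ∈ Finset.univ.erase j,
          (Real.tan (θ j / 2) / 2
                * (Real.tan (θ ℓ / 2) ^ 2 * pd F ℓ (fun i => Real.tan (θ i / 2)))
            + (1 + Real.tan (θ j / 2) ^ 2) / 2
                * (Real.tan (θ ℓ / 2) * pd F ℓ (fun i => Real.tan (θ i / 2)))
            + Real.tan (θ j / 2) * (2 + Real.tan (θ j / 2) ^ 2) / 2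
                * pd F ℓ (fun i => Real.tan (θ i / 2))
            + h * Real.tan (θ j / 2) * F (fun i => Real.tan (θ i / 2)) * Real.tan (θ ℓ / 2)
            + h * (1 + Real.tan (θ j / 2) ^ 2) / 2 * F (fun i => Real.tan (θ i / 2))
            + (1 / 2 * (1 + Real.tan (θ j / 2) ^ 2)) ^ 2
                * (2 * pd F ℓ (fun i => Real.tan (θ i / 2))
                      / (Real.tan (θ ℓ / 2) - Real.tan (θ j / 2))
                  - 2 * h * F (fun i => Real.tan (θ i / 2))
                      / (Real.tan (θ ℓ / 2) - Real.tan (θ j / 2)) ^ 2)))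
      = h' * F (fun i => Real.tan (θ i / 2)) := by
    simp only [Finset.sum_add_distrib, ← Finset.mul_sum, Finset.sum_const, nsmul_eq_mul]
    rw [hT, Finset.sum_erase_eq_sub (Finset.mem_univ j),
      Finset.sum_erase_eq_sub (Finset.mem_univ j),
      Finset.sum_erase_eq_sub (Finset.mem_univ j),
      Finset.sum_erase_eq_sub (Finset.mem_univ j),
      hm1, hm2, hm3, hcard, hh, hh']
    field_simp
    ring
  linear_combination (∏ i, ((1 / 2) * (1 + Real.tan (θ i / 2) ^ 2)) ^ h) * hkey
end
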